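/- Let ν be an admissible profile with dual profile ν', and let α'_max := inf{α' : ν'(α') = 1}. Then ν' is non-decreasing, and moreover for all α' ≤ α'_max and ε ≥ 0 one has ν'(α' - ε) ≤ ν'(α') - ε. -/

import Mathlib

noncomputable section
open Filter Set Topology

/-- Clamp an extended real into `{-∞} ∪ [0,1]`. -/
def clamp (b : EReal) : EReal := if b < 0 then ⊥ else min b 1

/-- The dual profile `ν'(α') = ⌊⌊ α' + inf{α : ν(α) - α > α'} ⌋⌋` (with `inf ∅ = +∞`). -/
def dualProfile (ν : ℝ → EReal) (a' : ℝ) : EReal :=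
  clamp ((a' : EReal) +
    sInf ((fun a : ℝ => (a : EReal)) '' {a : ℝ | (a' : EReal) < ν a - (a : EReal)}))

/-!
Write `ν' = clamp ∘ g` with `g α' = α' + I α'`, where `I α' = inf{α : ν(α) - α > α'}` is
non-decreasing in `α'`. Then `g` is non-decreasing and moreover `g (α' - ε) ≤ g α' - ε`, which
`clamp` preserves as long as it does not cut `g` at the value `1`. Below `α'_max` the function `g`
stays below `1`, and the inequality at a point where `g α' > 1` is recovered by letting
`α' - δ ↑ α'`.
-/

lemma clamp_le_self (b : EReal) : clamp b ≤ b := by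
  unfold clamp; split
  · exact bot_le
  · exact min_le_left _ _

lemma clamp_le_one (b : EReal) : clamp b ≤ 1 := by
  unfold clamp; split
  · exact bot_le
  · exact min_le_right _ _

lemma clamp_mono : Monotone clamp := by
  intro x y hxy
  unfold clamp
  split
  · exact bot_le
  · next hx =>
    rw [if_neg fun hy => hx (hxy.trans_lt hy)]
    exact min_le_min hxy le_rfl

lemma clamp_of_neg {b : EReal} (h : b < 0) : clamp b = ⊥ := if_pos h

lemma clamp_of_nonneg_of_le_one {b : EReal} (h0 : 0 ≤ b) (h1 : b ≤ 1) : clamp b = b := by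
  rw [clamp, if_neg (not_lt.2 h0), min_eq_left h1]

lemma clamp_of_one_le {b : EReal} (h : 1 ≤ b) : clamp b = 1 := by
  rw [clamp, if_neg (not_lt.2 (zero_le_one.trans h)), min_eq_right h]

lemma EReal.coe_add_sub_coe (r s : ℝ) (z : EReal) :
    ((r : EReal) + z) - s = ((r - s : ℝ) : EReal) + z := by
  induction z using EReal.rec with
  | bot => simp
  | coe t => norm_cast; ring
  | top => rw [EReal.coe_add_top, EReal.top_sub_coe, EReal.coe_add_top]

lemma le_coe_sub_of_forall_lt_le {g : ℝ → EReal} (hg : ∀ a e : ℝ, 0 ≤ e → g (a - e) ≤ g a - e)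
    {a c ε : ℝ} (hε : 0 < ε) (hlt : ∀ b < a, g b ≤ c) :
    g (a - ε) ≤ ((c - ε : ℝ) : EReal) := by
  refine EReal.le_of_forall_lt_iff_le.1 fun z hz => ?_
  replace hz : c - ε < z := EReal.coe_lt_coe_iff.1 hz
  set δ := min ε (z - c + ε)
  have hδ : 0 < δ := lt_min hε (by linarith)
  calc g (a - ε) = g ((a - δ) - (ε - δ)) := by ring_nf
    _ ≤ g (a - δ) - ((ε - δ : ℝ) : EReal) := hg _ _ (by linarith [min_le_left ε (z - c + ε)])
    _ ≤ (c : EReal) - ((ε - δ : ℝ) : EReal) := EReal.sub_le_sub (hlt _ (by linarith)) le_rfl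
    _ = ((c - (ε - δ) : ℝ) : EReal) := (EReal.coe_sub _ _).symm
    _ ≤ z := EReal.coe_le_coe_iff.2 (by linarith [min_le_right ε (z - c + ε)])

theorem clamp_comp_sub_le {g : ℝ → EReal} (hg : ∀ a e : ℝ, 0 ≤ e → g (a - e) ≤ g a - e)
    {a ε : ℝ} (hε : 0 ≤ ε) (hlt : ∀ b < a, g b < 1) :
    clamp (g (a - ε)) ≤ clamp (g a) - ε := by
  have hsub := hg a ε hε
  rcases lt_or_ge (g a) 0 with hneg | hnonneg
  · have hsub_self : g a - ε ≤ g a := by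
      simpa using EReal.sub_le_sub (le_refl (g a)) (EReal.coe_nonneg.2 hε)
    rw [clamp_of_neg (hsub.trans_lt (hsub_self.trans_lt hneg))]
    exact bot_le
  rcases le_or_gt (g a) 1 with hle | hgt
  · rw [clamp_of_nonneg_of_le_one hnonneg hle]
    exact (clamp_le_self _).trans hsub
  rw [clamp_of_one_le hgt.le]
  rcases hε.eq_or_lt with rfl | hεpos
  · simpa using clamp_le_one _
  calc clamp (g (a - ε)) ≤ g (a - ε) := clamp_le_self _
    _ ≤ ((1 - ε : ℝ) : EReal) :=
        le_coe_sub_of_forall_lt_le hg hεpos fun b hb => by exact_mod_cast (hlt b hb).le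
    _ = 1 - ε := EReal.coe_sub _ _

def unclampedDual (ν : ℝ → EReal) (a' : ℝ) : EReal :=
  (a' : EReal) + sInf ((fun a : ℝ => (a : EReal)) '' {a : ℝ | (a' : EReal) < ν a - (a : EReal)})

lemma sInf_superlevel_mono (ν : ℝ → EReal) : Monotone fun a' : ℝ =>
    sInf ((fun a : ℝ => (a : EReal)) '' {a : ℝ | (a' : EReal) < ν a - (a : EReal)}) :=
  fun _ _ hab => sInf_le_sInf <| image_mono fun _ hx => (EReal.coe_le_coe_iff.2 hab).trans_lt hx

lemma unclampedDual_mono (ν : ℝ → EReal) : Monotone (unclampedDual ν) :=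
  fun _ _ hab => add_le_add (EReal.coe_le_coe_iff.2 hab) (sInf_superlevel_mono ν hab)

lemma unclampedDual_sub_le (ν : ℝ → EReal) (a e : ℝ) (he : 0 ≤ e) :
    unclampedDual ν (a - e) ≤ unclampedDual ν a - e := by
  rw [unclampedDual, unclampedDual, EReal.coe_add_sub_coe]
  exact add_le_add le_rfl (sInf_superlevel_mono ν (by linarith))

theorem stmt8_general (ν : ℝ → EReal) :
    Monotone (dualProfile ν) ∧
    ∀ α' ε : ℝ, 0 ≤ ε →
      (α' : EReal) ≤ sInf ((fun a : ℝ => (a : EReal)) '' {a : ℝ | dualProfile ν a = 1}) →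
      dualProfile ν (α' - ε) ≤ dualProfile ν α' - (ε : EReal) := by
  refine ⟨clamp_mono.comp (unclampedDual_mono ν), fun α' ε hε hle => ?_⟩
  refine clamp_comp_sub_le (unclampedDual_sub_le ν) hε fun b hb => ?_
  by_contra! h1
  have hb1 : dualProfile ν b = 1 := clamp_of_one_le h1
  exact (hle.trans (sInf_le ⟨b, hb1, rfl⟩)).not_gt (EReal.coe_lt_coe_iff.2 hb)

theorem stmt8 (ν : ℝ → EReal)
    (hmono : Monotone ν)
    (hrc : ∀ a : ℝ, ContinuousWithinAt ν (Set.Ici a) a)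
    (hval : ∀ a : ℝ, ν a = ⊥ ∨ (0 ≤ ν a ∧ ν a ≤ 1))
    (hne : ∃ a : ℝ, ν a ≠ ⊥) :
    Monotone (dualProfile ν) ∧
    ∀ α' ε : ℝ, 0 ≤ ε →
      (α' : EReal) ≤ sInf ((fun a : ℝ => (a : EReal)) '' {a : ℝ | dualProfile ν a = 1}) →
      dualProfile ν (α' - ε) ≤ dualProfile ν α' - (ε : EReal) :=
  stmt8_general ν
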